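/- Let p, q be positive integers and let B be the (p+q)×(p+q) block matrix [[C_p, X],[0, C_q]], where X is a nonzero p×q 0-1 matrix. Then B^{lcm(p,q)+1} has an entry greater than 1; in particular θ(B) ≤ lcm(p,q). -/

import Mathlib

/-!
The top-right block of `[[A, X], [0, D]] ^ m` is `∑_{k < m} A ^ k * X * D ^ (m - 1 - k)`.
For `L = lcm p q` we have `C_p ^ L = 1` and `C_q ^ L = 1`, so in this sum for `m = L + 1`
the two terms `k = 0` and `k = L` both equal `X`; a nonzero entry of `X` therefore gives an
entry at least `2` in `B ^ (L + 1)`.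
-/

/-- A matrix over ℕ is a 0-1 matrix iff all its entries are at most 1. -/
def IsZO {α β : Type*} (A : Matrix α β ℕ) : Prop := ∀ i j, A i j ≤ 1

/-- The stable index of a 0-1 matrix: the smallest positive `k` with `A ^ (k+1)`
not a 0-1 matrix, or `⊤` if no such `k` exists. -/
noncomputable def theta {α : Type*} [Fintype α] [DecidableEq α]
    (A : Matrix α α ℕ) : ℕ∞ :=
  sInf ((fun k : ℕ => (k : ℕ∞)) '' {k : ℕ | 1 ≤ k ∧ ¬ IsZO (A ^ (k + 1))})

/-- `g(n)` from the paper. -/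
def g (n : ℕ) : ℕ :=
  if n % 2 = 1 then (n ^ 2 - 1) / 4
  else if n % 4 = 0 then (n ^ 2 - 4) / 4
  else (n ^ 2 - 16) / 4

/-- Basic circulant 0-1 matrix of order `n`. -/
def Cmat (n : ℕ) : Matrix (Fin n) (Fin n) ℕ :=
  Matrix.of fun i j => if (j : ℕ) = ((i : ℕ) + 1) % n then 1 else 0

/-- Condition (★) on `(n, p, q)`. -/
def StarCond (n p q : ℕ) : Prop :=
  p + q = n ∧
  ((n % 2 = 1 ∧ ({p, q} : Finset ℕ) = {(n + 1) / 2, (n - 1) / 2}) ∨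
   (n % 4 = 0 ∧ ({p, q} : Finset ℕ) = {(n + 2) / 2, (n - 2) / 2}) ∨
   (n % 4 = 2 ∧ ({p, q} : Finset ℕ) = {(n + 4) / 2, (n - 4) / 2}))

open Matrix Finset

section BlockUpperTriangular

variable {R ι κ : Type*} [Semiring R] [Fintype ι] [Fintype κ] [DecidableEq ι] [DecidableEq κ]

theorem fromBlocks_zero₂₁_pow (A : Matrix ι ι R) (X : Matrix ι κ R) (D : Matrix κ κ R) (m : ℕ) :
    fromBlocks A X 0 D ^ m =
      fromBlocks (A ^ m) (∑ k ∈ range m, A ^ k * X * D ^ (m - 1 - k)) 0 (D ^ m) := by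
  induction m with
  | zero => simp [fromBlocks_one]
  | succ m ih =>
    have hcorner : A ^ m * X + (∑ k ∈ range m, A ^ k * X * D ^ (m - 1 - k)) * D =
        ∑ k ∈ range (m + 1), A ^ k * X * D ^ (m + 1 - 1 - k) := by
      rw [Matrix.sum_mul, sum_range_succ, add_comm, Nat.add_sub_cancel, Nat.sub_self, pow_zero,
        Matrix.mul_one]
      congr 1
      refine sum_congr rfl fun k hk => ?_
      rw [Matrix.mul_assoc, ← pow_succ]
      have hkm := mem_range.mp hk
      congr 2
      omega
    rw [pow_succ, ih, fromBlocks_multiply]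
    simp only [Matrix.mul_zero, Matrix.zero_mul, add_zero, zero_add, ← pow_succ, hcorner]

theorem add_le_fromBlocks_zero₂₁_pow_succ_apply [Preorder R] [CanonicallyOrderedAdd R]
    {A : Matrix ι ι R} {D : Matrix κ κ R} {L : ℕ} (hL : L ≠ 0) (hA : A ^ L = 1) (hD : D ^ L = 1)
    (X : Matrix ι κ R) (i : ι) (j : κ) :
    X i j + X i j ≤ (fromBlocks A X 0 D ^ (L + 1)) (.inl i) (.inr j) := by
  rw [fromBlocks_zero₂₁_pow, fromBlocks_apply₁₂, Matrix.sum_apply]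
  have hterms : ∑ k ∈ ({0, L} : Finset ℕ), (A ^ k * X * D ^ (L + 1 - 1 - k)) i j =
      X i j + X i j := by
    simp [sum_pair hL.symm, hA, hD]
  rw [← hterms]
  refine sum_le_sum_of_subset fun k hk => ?_
  rcases mem_insert.mp hk with rfl | hk
  · simp
  · simp [mem_singleton.mp hk]

end BlockUpperTriangular

theorem Cmat_pow (n a : ℕ) :
    Cmat n ^ a = of fun i j : Fin n => if (j : ℕ) = ((i : ℕ) + a) % n then 1 else 0 := by
  induction a with
  | zero =>
    ext i j
    simp [one_apply, Nat.mod_eq_of_lt i.isLt, Fin.ext_iff, eq_comm]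
  | succ a ih =>
    ext i j
    rw [pow_succ, ih, mul_apply, sum_eq_single ⟨(i + a) % n, Nat.mod_lt _ i.pos⟩]
    · simp [Cmat, Nat.mod_add_mod, ← add_assoc]
    · intro k _ hk
      simp [Fin.ext_iff.not.mp hk]
    · simp

theorem Cmat_pow_self (n : ℕ) : Cmat n ^ n = 1 := by
  ext i j
  simp [Cmat_pow, one_apply, Nat.mod_eq_of_lt i.isLt, Fin.ext_iff, eq_comm]

theorem Cmat_pow_of_dvd {n m : ℕ} (h : n ∣ m) : Cmat n ^ m = 1 := by
  obtain ⟨c, rfl⟩ := h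
  rw [pow_mul, Cmat_pow_self, one_pow]

theorem theta_le_of_one_lt_pow_succ_apply {α : Type*} [Fintype α] [DecidableEq α]
    {A : Matrix α α ℕ} {k : ℕ} (hk : 1 ≤ k) {i j : α} (h : 1 < (A ^ (k + 1)) i j) :
    theta A ≤ k :=
  sInf_le ⟨k, ⟨hk, fun hZO => (hZO i j).not_gt h⟩, rfl⟩

theorem stmt_19_general (p q : ℕ)
    (X : Matrix (Fin p) (Fin q) ℕ) (hX0 : X ≠ 0) :
    (∃ i j, 1 <
      ((Matrix.fromBlocks (Cmat p) X 0 (Cmat q)) ^ (Nat.lcm p q + 1)) i j) ∧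
    theta (Matrix.fromBlocks (Cmat p) X 0 (Cmat q)) ≤
      ((Nat.lcm p q : ℕ) : ℕ∞) := by
  obtain ⟨i, j, hij⟩ : ∃ i j, X i j ≠ 0 := by
    by_contra! h
    exact hX0 (Matrix.ext h)
  have hL : Nat.lcm p q ≠ 0 := Nat.lcm_ne_zero i.pos.ne' j.pos.ne'
  have key : 1 < (fromBlocks (Cmat p) X 0 (Cmat q) ^ (Nat.lcm p q + 1)) (.inl i) (.inr j) :=
    lt_of_lt_of_le (by omega) <| add_le_fromBlocks_zero₂₁_pow_succ_apply hL
      (Cmat_pow_of_dvd (Nat.dvd_lcm_left p q)) (Cmat_pow_of_dvd (Nat.dvd_lcm_right p q)) X i j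
  exact ⟨⟨_, _, key⟩, theta_le_of_one_lt_pow_succ_apply (Nat.one_le_iff_ne_zero.mpr hL) key⟩

theorem stmt_19 (p q : ℕ) (hp : 0 < p) (hq : 0 < q)
    (X : Matrix (Fin p) (Fin q) ℕ) (hX : IsZO X) (hX0 : X ≠ 0) :
    (∃ i j, 1 <
      ((Matrix.fromBlocks (Cmat p) X 0 (Cmat q)) ^ (Nat.lcm p q + 1)) i j) ∧
    theta (Matrix.fromBlocks (Cmat p) X 0 (Cmat q)) ≤
      ((Nat.lcm p q : ℕ) : ℕ∞) :=
  stmt_19_general p q X hX0
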